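/- Let V be a finite nonempty type, L a natural number, and let A be a random variable taking values in a finite nonempty type 𝒜 and B a random variable taking values in Fin L → V, on a common probability space, with strictly positive joint probability mass function (P(A=a, B=x) > 0 for all a and x). Let ψ : 𝒜 → 𝒮 be a function into a finite type 𝒮 and set S := ψ(A). Then I(A;B) = I(S;B) if and only if for every coordinate i : Fin L, every a ∈ 𝒜, every x : Fin L → V and every v ∈ V, P(B_i = v | A=a, B_{-i} = x_{-i}) = P(B_i = v | S=ψ(a), B_{-i} = x_{-i}). -/

import Mathlib

open Classical

/-- Probability of an event `E` under the pmf `μ` on a finite sample space `Ω`. -/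
noncomputable def pr {Ω : Type*} [Fintype Ω] (μ : Ω → ℝ) (E : Ω → Prop) : ℝ :=
  ∑ ω, if E ω then μ ω else 0

/-- Mutual information `I(X;Y)` of two finite-valued random variables; summands with
zero joint probability vanish since the joint probability multiplies the logarithm. -/
noncomputable def mi {Ω 𝒳 𝒴 : Type*} [Fintype Ω] [Fintype 𝒳] [Fintype 𝒴]
    (μ : Ω → ℝ) (X : Ω → 𝒳) (Y : Ω → 𝒴) : ℝ :=
  ∑ x, ∑ y,
    pr μ (fun ω => X ω = x ∧ Y ω = y) *
      Real.log (pr μ (fun ω => X ω = x ∧ Y ω = y) /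
        (pr μ (fun ω => X ω = x) * pr μ (fun ω => Y ω = y)))

lemma pr_congr {Ω : Type*} [Fintype Ω] (μ : Ω → ℝ) {E F : Ω → Prop}
    (h : ∀ ω, E ω ↔ F ω) : pr μ E = pr μ F := by
  unfold pr
  exact Finset.sum_congr rfl fun ω _ => by rw [if_congr (h ω) rfl rfl]

lemma pr_partition {Ω 𝒳 : Type*} [Fintype Ω] [Fintype 𝒳] (μ : Ω → ℝ)
    (E : Ω → Prop) (X : Ω → 𝒳) :
    pr μ E = ∑ x : 𝒳, pr μ (fun ω => E ω ∧ X ω = x) := by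
  unfold pr
  rw [Finset.sum_comm]
  refine Finset.sum_congr rfl fun ω _ => ?_
  by_cases h : E ω <;> simp [h]

lemma pr_false {Ω : Type*} [Fintype Ω] (μ : Ω → ℝ) : pr μ (fun _ => False) = 0 := by
  simp [pr]

lemma pr_fiber {Ω 𝒜 𝒮 : Type*} [Fintype Ω] [Fintype 𝒜] (μ : Ω → ℝ)
    (A : Ω → 𝒜) (ψ : 𝒜 → 𝒮) (s : 𝒮) (E : Ω → Prop) :
    pr μ (fun ω => ψ (A ω) = s ∧ E ω) =
      ∑ a ∈ Finset.univ.filter fun a => ψ a = s, pr μ (fun ω => A ω = a ∧ E ω) := by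
  rw [pr_partition μ _ A, Finset.sum_filter]
  refine Finset.sum_congr rfl fun a _ => ?_
  by_cases h : ψ a = s
  · rw [if_pos h]
    apply pr_congr
    intro ω
    constructor
    · rintro ⟨⟨_, h2⟩, h3⟩; exact ⟨h3, h2⟩
    · rintro ⟨h3, h2⟩; subst h3; exact ⟨⟨h, h2⟩, rfl⟩
  · rw [if_neg h, ← pr_false μ]
    apply pr_congr
    intro ω
    constructor
    · rintro ⟨⟨h1, _⟩, h3⟩; subst h3; exact h h1
    · exact fun hF => hF.elim

lemma kl_eq_zero_iff {ι : Type*} [Fintype ι] (p q : ι → ℝ)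
    (hp : ∀ i, 0 < p i) (hq : ∀ i, 0 < q i) (hsum : ∑ i, p i = ∑ i, q i) :
    ((∑ i, p i * Real.log (p i / q i)) = 0 ↔ ∀ i, p i = q i) := by
  set t : ι → ℝ := fun i => p i * Real.log (p i / q i) - (p i - q i) with ht
  have hkey : ∀ i, 0 ≤ t i ∧ (t i = 0 ↔ p i = q i) := by
    intro i
    have hp' := hp i; have hq' := hq i
    have hlog : Real.log (q i / p i) ≤ q i / p i - 1 :=
      Real.log_le_sub_one_of_pos (div_pos hq' hp')
    have hlogeq : Real.log (q i / p i) = - Real.log (p i / q i) := by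
      rw [← Real.log_inv, inv_div]
    have hti : t i = p i * ((q i / p i - 1) - Real.log (q i / p i)) := by
      rw [hlogeq]; field_simp [ht]; ring
    constructor
    · rw [hti]
      exact mul_nonneg hp'.le (by linarith)
    · constructor
      · intro h0
        by_contra hne
        have hne' : q i / p i ≠ 1 := by
          intro h1
          exact hne ((div_eq_one_iff_eq hp'.ne').mp h1).symm
        have hlt := Real.log_lt_sub_one_of_pos (div_pos hq' hp') hne'
        have : 0 < t i := by rw [hti]; exact mul_pos hp' (by linarith)
        linarith
      · intro h
        rw [hti, h]
        simp [div_self (hq i).ne']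
  have hts : ∑ i, t i = ∑ i, p i * Real.log (p i / q i) := by
    rw [ht]; rw [Finset.sum_sub_distrib, Finset.sum_sub_distrib, hsum]; ring
  constructor
  · intro h0 i
    have hz : ∑ i, t i = 0 := by rw [hts, h0]
    have := (Finset.sum_eq_zero_iff_of_nonneg (fun i _ => (hkey i).1)).mp hz i (Finset.mem_univ i)
    exact (hkey i).2.mp this
  · intro h
    rw [← hts]
    exact Finset.sum_eq_zero fun i _ => (hkey i).2.mpr (h i)

lemma const_of_update {L : ℕ} {V : Type*} [Fintype V] (h : (Fin L → V) → ℝ)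
    (H : ∀ (x : Fin L → V) (i : Fin L) (v : V), h (Function.update x i v) = h x)
    (x y : Fin L → V) : h x = h y := by
  suffices key : ∀ (n : ℕ) (x y : Fin L → V),
      (Finset.univ.filter fun i => x i ≠ y i).card ≤ n → h x = h y from
    key _ x y le_rfl
  intro n
  induction n with
  | zero =>
    intro x y hc
    have hxy : x = y := by
      funext i
      by_contra hi
      have hm : i ∈ Finset.univ.filter fun i => x i ≠ y i := by simp [hi]
      have := Finset.card_pos.mpr ⟨i, hm⟩
      omega
    rw [hxy]
  | succ n ih =>
    intro x y hc
    by_cases hxy : x = y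
    · rw [hxy]
    · have hex : ∃ i, x i ≠ y i := by
        by_contra hi
        push_neg at hi
        exact hxy (funext hi)
      obtain ⟨i, hi⟩ := hex
      rw [(H x i (y i)).symm]
      apply ih
      have hsub : (Finset.univ.filter fun j => Function.update x i (y i) j ≠ y j) ⊆
          (Finset.univ.filter fun j => x j ≠ y j).erase i := by
        intro j hj
        simp only [Finset.mem_filter, Finset.mem_univ, true_and] at hj
        rcases eq_or_ne j i with rfl | hji
        · simp [Function.update_self] at hj
        · rw [Function.update_of_ne hji] at hj
          exact Finset.mem_erase.mpr ⟨hji, by simp [hj]⟩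
      have hcard := Finset.card_le_card hsub
      have hmem : i ∈ Finset.univ.filter fun j => x j ≠ y j := by simp [hi]
      have := Finset.card_erase_of_mem hmem
      omega

theorem stmt10 {Ω V 𝒜 𝒮 : Type*} [Fintype Ω] [Nonempty Ω]
    [Fintype V] [Nonempty V] [Fintype 𝒜] [Nonempty 𝒜] [Fintype 𝒮] {L : ℕ}
    (μ : Ω → ℝ) (hμ0 : ∀ ω, 0 ≤ μ ω) (hμ1 : ∑ ω, μ ω = 1)
    (A : Ω → 𝒜) (B : Ω → (Fin L → V))
    (hpos : ∀ (a : 𝒜) (x : Fin L → V), 0 < pr μ (fun ω => A ω = a ∧ B ω = x))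
    (ψ : 𝒜 → 𝒮) :
    mi μ A B = mi μ (fun ω => ψ (A ω)) B ↔
      (∀ (i : Fin L) (a : 𝒜) (x : Fin L → V) (v : V),
        pr μ (fun ω => B ω = Function.update x i v ∧ A ω = a) /
            ∑ w : V, pr μ (fun ω => B ω = Function.update x i w ∧ A ω = a) =
          pr μ (fun ω => B ω = Function.update x i v ∧ ψ (A ω) = ψ a) /
            ∑ w : V, pr μ (fun ω => B ω = Function.update x i w ∧ ψ (A ω) = ψ a)) := by
  classical
  set f : 𝒜 → (Fin L → V) → ℝ := fun a x => pr μ (fun ω => A ω = a ∧ B ω = x) with hf_def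
  set g : 𝒮 → (Fin L → V) → ℝ := fun s x => pr μ (fun ω => ψ (A ω) = s ∧ B ω = x) with hg_def
  set F : 𝒜 → ℝ := fun a => pr μ (fun ω => A ω = a) with hF_def
  set G : 𝒮 → ℝ := fun s => pr μ (fun ω => ψ (A ω) = s) with hG_def
  set Pb : (Fin L → V) → ℝ := fun x => pr μ (fun ω => B ω = x) with hPb_def
  -- basic identities
  have hgf : ∀ s x, g s x = ∑ a ∈ Finset.univ.filter fun a => ψ a = s, f a x :=
    fun s x => pr_fiber μ A ψ s _
  have hGF : ∀ s, G s = ∑ a ∈ Finset.univ.filter fun a => ψ a = s, F a := by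
    intro s
    have h1 : G s = pr μ (fun ω => ψ (A ω) = s ∧ True) :=
      pr_congr μ fun ω => (iff_of_eq (and_true _)).symm
    rw [h1, pr_fiber μ A ψ s (fun _ => True)]
    exact Finset.sum_congr rfl fun a _ => pr_congr μ fun ω => iff_of_eq (and_true _)
  have hF : ∀ a, F a = ∑ x, f a x := fun a => pr_partition μ _ B
  have hGsum : ∀ s, G s = ∑ x, g s x := fun s => pr_partition μ _ B
  have hPb : ∀ x, Pb x = ∑ a, f a x := by
    intro x
    show pr μ (fun ω => B ω = x) = _
    rw [pr_partition μ (fun ω => B ω = x) A]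
    exact Finset.sum_congr rfl fun a _ => pr_congr μ fun ω => and_comm
  -- positivity
  have hfpos : ∀ a x, 0 < f a x := hpos
  have hFpos : ∀ a, 0 < F a := fun a => by
    rw [hF a]; exact Finset.sum_pos (fun x _ => hfpos a x) Finset.univ_nonempty
  have hfiber : ∀ a : 𝒜, a ∈ Finset.univ.filter fun b => ψ b = ψ a := fun a => by simp
  have hgpos : ∀ a x, 0 < g (ψ a) x := fun a x => by
    rw [hgf]; exact Finset.sum_pos (fun b _ => hfpos b x) ⟨a, hfiber a⟩
  have hGpos : ∀ a, 0 < G (ψ a) := fun a => by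
    rw [hGF]; exact Finset.sum_pos (fun b _ => hFpos b) ⟨a, hfiber a⟩
  have hPbpos : ∀ x, 0 < Pb x := fun x => by
    rw [hPb x]; exact Finset.sum_pos (fun a _ => hfpos a x) Finset.univ_nonempty
  -- rewriting the mutual informations
  have hmiA : mi μ A B = ∑ a, ∑ x, f a x * Real.log (f a x / (F a * Pb x)) := rfl
  have hmiS : mi μ (fun ω => ψ (A ω)) B =
      ∑ a, ∑ x, f a x * Real.log (g (ψ a) x / (G (ψ a) * Pb x)) := by
    have step1 : mi μ (fun ω => ψ (A ω)) B =
        ∑ s, ∑ a ∈ Finset.univ.filter fun a => ψ a = s,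
          ∑ x, f a x * Real.log (g s x / (G s * Pb x)) := by
      show (∑ s, ∑ x, g s x * Real.log (g s x / (G s * Pb x))) = _
      refine Finset.sum_congr rfl fun s _ => ?_
      calc ∑ x, g s x * Real.log (g s x / (G s * Pb x))
          = ∑ x, ∑ a ∈ Finset.univ.filter fun a => ψ a = s,
              f a x * Real.log (g s x / (G s * Pb x)) := by
            refine Finset.sum_congr rfl fun x _ => ?_
            rw [hgf s x, Finset.sum_mul]
        _ = _ := Finset.sum_comm
    rw [step1,
      ← Finset.sum_fiberwise Finset.univ ψ
        (fun a => ∑ x, f a x * Real.log (g (ψ a) x / (G (ψ a) * Pb x)))]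
    refine Finset.sum_congr rfl fun s _ => Finset.sum_congr rfl fun a ha => ?_
    have hs : ψ a = s := (Finset.mem_filter.mp ha).2
    rw [hs]
  -- the KL-divergence form of the difference
  have hdiff : mi μ A B - mi μ (fun ω => ψ (A ω)) B =
      ∑ z : 𝒜 × (Fin L → V),
        f z.1 z.2 * Real.log (f z.1 z.2 / (F z.1 * g (ψ z.1) z.2 / G (ψ z.1))) := by
    rw [hmiA, hmiS, ← Finset.sum_sub_distrib, Fintype.sum_prod_type]
    refine Finset.sum_congr rfl fun a _ => ?_
    rw [← Finset.sum_sub_distrib]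
    refine Finset.sum_congr rfl fun x _ => ?_
    rw [← mul_sub]
    congr 1
    rw [← Real.log_div
      (div_ne_zero (hfpos a x).ne' (mul_pos (hFpos a) (hPbpos x)).ne')
      (div_ne_zero (hgpos a x).ne' (mul_pos (hGpos a) (hPbpos x)).ne')]
    congr 1
    field_simp [(hfpos a x).ne', (hFpos a).ne', (hPbpos x).ne', (hgpos a x).ne', (hGpos a).ne']
  -- sums of p and q agree
  have hqsum : (∑ z : 𝒜 × (Fin L → V), f z.1 z.2) =
      ∑ z : 𝒜 × (Fin L → V), F z.1 * g (ψ z.1) z.2 / G (ψ z.1) := by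
    rw [Fintype.sum_prod_type, Fintype.sum_prod_type]
    refine Finset.sum_congr rfl fun a _ => ?_
    rw [← hF a]
    have h2 : (∑ x, F a * g (ψ a) x / G (ψ a)) = F a * (∑ x, g (ψ a) x) / G (ψ a) := by
      rw [Finset.mul_sum, Finset.sum_div]
    rw [h2, ← hGsum (ψ a), mul_div_assoc, div_self (hGpos a).ne', mul_one]
  have hkl := kl_eq_zero_iff (fun z : 𝒜 × (Fin L → V) => f z.1 z.2)
    (fun z => F z.1 * g (ψ z.1) z.2 / G (ψ z.1))
    (fun z => hfpos z.1 z.2)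
    (fun z => div_pos (mul_pos (hFpos z.1) (hgpos z.1 z.2)) (hGpos z.1))
    hqsum
  -- the key intermediate characterization
  have key : (mi μ A B = mi μ (fun ω => ψ (A ω)) B) ↔
      ∀ a x, f a x * G (ψ a) = F a * g (ψ a) x := by
    rw [← sub_eq_zero, hdiff, hkl]
    constructor
    · intro h a x
      have h3 := h (a, x)
      rw [eq_div_iff (hGpos a).ne'] at h3
      exact h3
    · intro h z
      rw [eq_div_iff (hGpos z.1).ne']
      exact h z.1 z.2
  rw [key]
  -- translation of the pr's in the RHS
  have hBA : ∀ (a : 𝒜) (u : Fin L → V),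
      pr μ (fun ω => B ω = u ∧ A ω = a) = f a u :=
    fun a u => pr_congr μ fun ω => and_comm
  have hBS : ∀ (a : 𝒜) (u : Fin L → V),
      pr μ (fun ω => B ω = u ∧ ψ (A ω) = ψ a) = g (ψ a) u :=
    fun a u => pr_congr μ fun ω => and_comm
  constructor
  · -- full conditional equality implies single-coordinate equality
    intro C i a x v
    simp only [hBA, hBS]
    have hc : ∀ u, f a u = (F a / G (ψ a)) * g (ψ a) u := by
      intro u
      rw [div_mul_eq_mul_div, eq_div_iff (hGpos a).ne']
      exact C a u
    have hne : F a / G (ψ a) ≠ 0 := (div_pos (hFpos a) (hGpos a)).ne'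
    calc f a (Function.update x i v) / ∑ w, f a (Function.update x i w)
        = (F a / G (ψ a)) * g (ψ a) (Function.update x i v) /
            ((F a / G (ψ a)) * ∑ w, g (ψ a) (Function.update x i w)) := by
          rw [← hc, Finset.mul_sum]
          congr 1
          exact Finset.sum_congr rfl fun w _ => hc _
      _ = g (ψ a) (Function.update x i v) / ∑ w, g (ψ a) (Function.update x i w) :=
          mul_div_mul_left _ _ hne
  · -- single-coordinate equality implies full conditional equality
    intro hco a x
    have hcoord : ∀ (i : Fin L) (y : Fin L → V) (v : V),
        f a (Function.update y i v) * (∑ w, g (ψ a) (Function.update y i w)) =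
          g (ψ a) (Function.update y i v) * (∑ w, f a (Function.update y i w)) := by
      intro i y v
      have H := hco i a y v
      simp only [hBA, hBS] at H
      have hSf : (0:ℝ) < ∑ w, f a (Function.update y i w) :=
        Finset.sum_pos (fun w _ => hfpos a _) Finset.univ_nonempty
      have hSg : (0:ℝ) < ∑ w, g (ψ a) (Function.update y i w) :=
        Finset.sum_pos (fun w _ => hgpos a _) Finset.univ_nonempty
      exact (div_eq_div_iff hSf.ne' hSg.ne').mp H
    have hconst : ∀ y z : Fin L → V,
        f a y / g (ψ a) y = f a z / g (ψ a) z := by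
      apply const_of_update
      intro y i v
      have hSg : (0:ℝ) < ∑ w, g (ψ a) (Function.update y i w) :=
        Finset.sum_pos (fun w _ => hgpos a _) Finset.univ_nonempty
      have e : ∀ v' : V, f a (Function.update y i v') / g (ψ a) (Function.update y i v') =
          (∑ w, f a (Function.update y i w)) / (∑ w, g (ψ a) (Function.update y i w)) := by
        intro v'
        rw [div_eq_div_iff (hgpos a _).ne' hSg.ne']
        exact (hcoord i y v').trans (mul_comm _ _)
      calc f a (Function.update y i v) / g (ψ a) (Function.update y i v)
          = (∑ w, f a (Function.update y i w)) / (∑ w, g (ψ a) (Function.update y i w)) := e v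
        _ = f a (Function.update y i (y i)) / g (ψ a) (Function.update y i (y i)) :=
            (e (y i)).symm
        _ = f a y / g (ψ a) y := by rw [Function.update_eq_self]
    have hcross : ∀ y : Fin L → V, f a x * g (ψ a) y = f a y * g (ψ a) x := fun y =>
      (div_eq_div_iff (hgpos a x).ne' (hgpos a y).ne').mp (hconst x y)
    calc f a x * G (ψ a) = f a x * ∑ y, g (ψ a) y := by rw [← hGsum]
      _ = ∑ y, f a x * g (ψ a) y := Finset.mul_sum _ _ _
      _ = ∑ y, f a y * g (ψ a) x := Finset.sum_congr rfl fun y _ => hcross y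
      _ = (∑ y, f a y) * g (ψ a) x := (Finset.sum_mul _ _ _).symm
      _ = F a * g (ψ a) x := by rw [← hF]
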